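/- arXiv:math/0703546 — 5 statements merged into one kernel-verified Lean document; each statement's English description precedes it below -/
import Mathlib

section
/- For integers 0 ≤ l, j ≤ n and α ≥ 1, the telescoping identity R(n;l,j) = Σ_{k=max(l,j)}^n C(k;l,j) holds, where R(n;l,j) = (−1)^{l+j} ([l+j+α]_q/[α]_q) (n+l+α choose n−j)_q (n+j+α choose n−l)_q (l+j+α−1 choose l)_q (l+j+α−1 choose j)_q and C(k;l,j) = (−1)^{l+j} ([2k+α]_q/[α]_q) (k choose l)_q (k choose j)_q (k+l+α−1 choose k)_q (k+j+α−1 choose k)_q. -/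
/-!
Writing the quantum binomials through quantum factorials `[m]! = [1] ⋯ [m]`, both sides share the
factor `K = (-1)^(l+j) / ([α] [l]! [j]! [l+α-1]! [j+α-1]!)`, and what remains is
`R(N) = K · F(N) / [l+j+α]` and `C(k) = K · [2k+α] · g(k)` with
`F(N) = [N+l+α]! [N+j+α]! / ([N-l]! [N-j]!)` and `g(k) = [k+l+α-1]! [k+j+α-1]! / ([k-l]! [k-j]!)`.
Pulling `g(N+1)` out of `F(N+1)` and `F(N)` leaves the quantum-integer identity
`[N+l+α] [N+j+α] = [2N+α] [l+j+α] + [N-l] [N-j]`, which gives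
`F(N+1) - F(N) = [l+j+α] [2N+2+α] g(N+1)`; at `N = max l j` the last product contains `[0] = 0`,
which starts the telescoping.
-/

noncomputable def qint (s : ℂ) (m : ℕ) : ℂ := (s ^ m - s⁻¹ ^ m) / (s - s⁻¹)

noncomputable def qbinom (s : ℂ) (m k : ℕ) : ℂ :=
  ∏ j ∈ Finset.range k, qint s (m - j) / qint s (j + 1)

theorem qint_zero (s : ℂ) : qint s 0 = 0 := by simp [qint]

theorem qint_add_mul_qint_add (s : ℂ) (p r t : ℕ) :
    qint s (r + t) * qint s (p + t) = qint s (p + r + t) * qint s t + qint s p * qint s r := by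
  rcases eq_or_ne s 0 with rfl | hs
  · simp [qint]
  have hst : (s * s⁻¹) ^ t = 1 := by rw [mul_inv_cancel₀ hs, one_pow]
  simp only [qint, div_mul_div_comm, ← add_div]
  congr 1
  linear_combination (s ^ p * s ^ r + s⁻¹ ^ p * s⁻¹ ^ r - s ^ r * s⁻¹ ^ p - s ^ p * s⁻¹ ^ r) * hst

theorem qint_ne_zero {s : ℂ} {m : ℕ} (hs : s ≠ 0) (hs2 : s ^ 2 ≠ 1) (hm : (s ^ 2) ^ m ≠ 1) :
    qint s m ≠ 0 := by
  have key : ∀ {i : ℕ}, (s ^ 2) ^ i ≠ 1 → s ^ i - s⁻¹ ^ i ≠ 0 := by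
    intro i hi h
    have hsi : (s * s⁻¹) ^ i = 1 := by rw [mul_inv_cancel₀ hs, one_pow]
    exact hi (by linear_combination s ^ i * h + hsi)
  exact div_ne_zero (key hm) (by simpa using key (i := 1) (by simpa using hs2))

noncomputable def qfact (s : ℂ) (m : ℕ) : ℂ := ∏ i ∈ Finset.range m, qint s (i + 1)

theorem qfact_succ (s : ℂ) (m : ℕ) : qfact s (m + 1) = qfact s m * qint s (m + 1) :=
  Finset.prod_range_succ _ _

theorem qfact_eq_qfact_sub_one_mul (s : ℂ) {m : ℕ} (hm : 1 ≤ m) :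
    qfact s m = qfact s (m - 1) * qint s m := by
  obtain ⟨m, rfl⟩ := Nat.exists_eq_add_of_le' hm
  exact qfact_succ s m

theorem qfact_ne_zero {s : ℂ} {m : ℕ} (h : ∀ i, 1 ≤ i → i ≤ m → qint s i ≠ 0) :
    qfact s m ≠ 0 :=
  Finset.prod_ne_zero_iff.2 fun i hi => h (i + 1) (by omega) (by simp at hi; omega)

theorem prod_range_qint_mul_qfact (s : ℂ) (a b : ℕ) :
    (∏ i ∈ Finset.range a, qint s (a + b - i)) * qfact s b = qfact s (a + b) := by
  induction a with
  | zero => simp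
  | succ a ih =>
    have hshift : ∀ i, a + 1 + b - (i + 1) = a + b - i := by omega
    rw [Finset.prod_range_succ', mul_right_comm]
    simp only [hshift, ih, Nat.sub_zero]
    rw [show a + 1 + b = a + b + 1 by omega, qfact_succ]

theorem qbinom_eq_qfact_div {s : ℂ} {m k b : ℕ} (h : m = k + b) (hb : qfact s b ≠ 0) :
    qbinom s m k = qfact s m / (qfact s k * qfact s b) := by
  subst h
  rw [qbinom, Finset.prod_div_distrib, ← prod_range_qint_mul_qfact s k b, mul_div_mul_right _ _ hb]
  rfl

theorem qint_mul_qint_eq (s : ℂ) {l j N : ℕ} (α : ℕ) (hl : l ≤ N) (hj : j ≤ N) :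
    qint s (N + l + α) * qint s (N + j + α) =
      qint s (2 * N + α) * qint s (l + j + α) + qint s (N - l) * qint s (N - j) := by
  have := qint_add_mul_qint_add s (N - l) (N - j) (l + j + α)
  rwa [show N - j + (l + j + α) = N + l + α by omega, show N - l + (l + j + α) = N + j + α by omega,
    show N - l + (N - j) + (l + j + α) = 2 * N + α by omega] at this

-- `F(N)` and `g(k)` of the header.
noncomputable def rCore (s : ℂ) (α l j N : ℕ) : ℂ :=
  qfact s (N + l + α) * qfact s (N + j + α) / (qfact s (N - l) * qfact s (N - j))

noncomputable def cCore (s : ℂ) (α l j k : ℕ) : ℂ :=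
  qfact s (k + l + α - 1) * qfact s (k + j + α - 1) / (qfact s (k - l) * qfact s (k - j))

section Telescoping

variable {s : ℂ} {α l j : ℕ}

theorem rCore_eq_cCore_mul (hα : 1 ≤ α) (k : ℕ) :
    rCore s α l j k = cCore s α l j k * (qint s (k + l + α) * qint s (k + j + α)) := by
  rw [rCore, cCore, qfact_eq_qfact_sub_one_mul s (m := k + l + α) (by omega),
    qfact_eq_qfact_sub_one_mul s (m := k + j + α) (by omega)]
  ring

theorem rCore_eq_cCore_succ_mul {N : ℕ} (hl : l ≤ N) (hj : j ≤ N)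
    (hl' : qint s (N + 1 - l) ≠ 0) (hj' : qint s (N + 1 - j) ≠ 0) :
    rCore s α l j N = cCore s α l j (N + 1) * (qint s (N + 1 - l) * qint s (N + 1 - j)) := by
  rw [rCore, cCore]
  rw [show N + 1 - l = N - l + 1 by omega] at hl' ⊢
  rw [show N + 1 - j = N - j + 1 by omega] at hj' ⊢
  rw [show N + 1 + l + α - 1 = N + l + α by omega,
    show N + 1 + j + α - 1 = N + j + α by omega, qfact_succ, qfact_succ, div_mul_eq_mul_div,
    mul_mul_mul_comm (qfact s (N - l)), mul_div_mul_right _ _ (mul_ne_zero hl' hj')]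

theorem rCore_eq_sum (hα : 1 ≤ α) {N : ℕ} (hN : max l j ≤ N)
    (hq : ∀ m, 1 ≤ m → m ≤ N → qint s m ≠ 0) :
    rCore s α l j N =
      qint s (l + j + α) * ∑ k ∈ Finset.Icc (max l j) N, qint s (2 * k + α) * cCore s α l j k := by
  induction N, hN using Nat.le_induction with
  | base =>
    have hvanish : qint s (max l j - l) * qint s (max l j - j) = 0 := by
      rcases le_total l j with h | h <;> simp [h, qint_zero]
    rw [Finset.Icc_self, Finset.sum_singleton, rCore_eq_cCore_mul hα,
      qint_mul_qint_eq s α (le_max_left l j) (le_max_right l j), hvanish]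
    ring
  | succ N hN ih =>
    rw [Finset.sum_Icc_succ_top (by omega), mul_add, ← ih fun m h1 hm => hq m h1 (by omega),
      rCore_eq_cCore_succ_mul (N := N) (by omega) (by omega) (hq _ (by omega) (by omega))
        (hq _ (by omega) (by omega)),
      rCore_eq_cCore_mul hα (N + 1), qint_mul_qint_eq s α (by omega) (by omega)]
    ring

end Telescoping

section Normalization

variable {s : ℂ} {n l j α : ℕ}

theorem lhs_eq_mul_rCore (hq : ∀ m, 1 ≤ m → m ≤ 2 * n + α → qint s m ≠ 0)
    (hl : l ≤ n) (hj : j ≤ n) (hα : 1 ≤ α) :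
    (-1 : ℂ) ^ (l + j) * (qint s (l + j + α) / qint s α) *
        (qbinom s (n + l + α) (n - j) * qbinom s (n + j + α) (n - l) *
          qbinom s (l + j + α - 1) l * qbinom s (l + j + α - 1) j) =
      (-1 : ℂ) ^ (l + j) /
          (qint s α * qfact s l * qfact s j * qfact s (l + α - 1) * qfact s (j + α - 1)) *
        (rCore s α l j n / qint s (l + j + α)) := by
  have hF : ∀ m ≤ 2 * n + α, qfact s m ≠ 0 := fun m hm =>
    qfact_ne_zero fun i h1 hi => hq i h1 (by omega)
  rw [qbinom_eq_qfact_div (b := l + j + α) (by omega) (hF _ (by omega)),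
    qbinom_eq_qfact_div (b := l + j + α) (by omega) (hF _ (by omega)),
    qbinom_eq_qfact_div (b := j + α - 1) (by omega) (hF _ (by omega)),
    qbinom_eq_qfact_div (b := l + α - 1) (by omega) (hF _ (by omega)),
    qfact_eq_qfact_sub_one_mul s (m := l + j + α) (by omega), rCore]
  have hqα := hq α hα (by omega)
  have hqt := hq (l + j + α) (by omega) (by omega)
  have hFt := hF (l + j + α - 1) (by omega)
  field_simp

theorem summand_eq_mul_cCore {k : ℕ} (hq : ∀ m, 1 ≤ m → m ≤ 2 * n + α → qint s m ≠ 0)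
    (hl : l ≤ k) (hj : j ≤ k) (hk : k ≤ n) (hα : 1 ≤ α) :
    (-1 : ℂ) ^ (l + j) * (qint s (2 * k + α) / qint s α) *
        (qbinom s k l * qbinom s k j *
          qbinom s (k + l + α - 1) k * qbinom s (k + j + α - 1) k) =
      (-1 : ℂ) ^ (l + j) /
          (qint s α * qfact s l * qfact s j * qfact s (l + α - 1) * qfact s (j + α - 1)) *
        (qint s (2 * k + α) * cCore s α l j k) := by
  have hF : ∀ m ≤ 2 * n + α, qfact s m ≠ 0 := fun m hm =>
    qfact_ne_zero fun i h1 hi => hq i h1 (by omega)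
  rw [qbinom_eq_qfact_div (b := k - l) (by omega) (hF _ (by omega)),
    qbinom_eq_qfact_div (b := k - j) (by omega) (hF _ (by omega)),
    qbinom_eq_qfact_div (b := l + α - 1) (by omega) (hF _ (by omega)),
    qbinom_eq_qfact_div (b := j + α - 1) (by omega) (hF _ (by omega)), cCore]
  have hFk := hF k (by omega)
  -- without this `field_simp` times out
  generalize (-1 : ℂ) ^ (l + j) = σ
  field_simp

end Normalization

theorem telescoping_identity (s : ℂ) (hs0 : s ≠ 0) (n l j α : ℕ)
    (hl : l ≤ n) (hj : j ≤ n) (hα : 1 ≤ α)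
    (hroot : ∀ m : ℕ, 1 ≤ m → m ≤ 2 * n + α → (s ^ 2) ^ m ≠ 1) :
    (-1 : ℂ) ^ (l + j) * (qint s (l + j + α) / qint s α) *
        (qbinom s (n + l + α) (n - j) * qbinom s (n + j + α) (n - l) *
          qbinom s (l + j + α - 1) l * qbinom s (l + j + α - 1) j) =
    ∑ k ∈ Finset.Icc (max l j) n,
      (-1 : ℂ) ^ (l + j) * (qint s (2 * k + α) / qint s α) *
        (qbinom s k l * qbinom s k j *
          qbinom s (k + l + α - 1) k * qbinom s (k + j + α - 1) k) := by
  have hq : ∀ m, 1 ≤ m → m ≤ 2 * n + α → qint s m ≠ 0 := fun m h1 hm =>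
    qint_ne_zero hs0 (by simpa using hroot 1 le_rfl (by omega)) (hroot m h1 hm)
  rw [lhs_eq_mul_rCore hq hl hj hα,
    rCore_eq_sum hα (max_le hl hj) fun m h1 hm => hq m h1 (by omega),
    mul_div_cancel_left₀ _ (hq _ (by omega) (by omega)), Finset.mul_sum]
  refine Finset.sum_congr rfl fun k hk => ?_
  rw [Finset.mem_Icc, max_le_iff] at hk
  exact (summand_eq_mul_cCore hq hk.1.1 hk.1.2 hk.2 hα).symm
end

section
/- The inverse of the Hilbert matrix H_n = (1/(l+j+1))_{0≤l,j≤n} has integer entries given by Choi's formula: (H_n^{-1})_{l,j} = (−1)^{l+j} (l+j+1) C(n+l+1, n−j) C(n+j+1, n−l) C(l+j, l) C(l+j, j), where C denotes the binomial coefficient. -/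
/-!
The Hilbert matrix is the Cauchy matrix `(x l - y j)⁻¹` with nodes `x l = l` and
`y j = -(j + 1)`. A Cauchy matrix with distinct nodes is inverted by Lagrange interpolation:
the polynomial `∏_{m ≠ k} (X - x m)` has degree less than the number of nodes, so it equals its
interpolant at the nodes `y`; evaluating both at `x l` and dividing by `∏_j (x l - y j)` gives
`∑_j (x l - y j)⁻¹ D j k = δ l k` for an explicit matrix `D` built from nodal polynomials and
nodal weights. At the Hilbert nodes all these products are factorials, and `D` becomes Choi's
formula.
-/

open Finset Function Lagrange Matrix Nat Polynomial

theorem Fin.prod_univ_erase_eq_prod_range_erase {M : Type*} [CommMonoid M] {n : ℕ}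
    (f : ℕ → M) (k : Fin n) :
    ∏ m ∈ univ.erase k, f m = ∏ m ∈ (range n).erase (k : ℕ), f m := by
  rw [← Nat.Iio_eq_range, ← Fin.map_valEmbedding_univ, show (k : ℕ) = Fin.valEmbedding k from rfl,
    ← map_erase, prod_map]
  rfl

section Products

variable {R : Type*} [CommRing R]

theorem cast_ascFactorial_eq_prod_range (a n : ℕ) :
    (a.ascFactorial n : R) = ∏ m ∈ range n, ((a : R) + m) := by
  rw [ascFactorial_eq_prod_range]; push_cast; rfl

theorem prod_range_erase_sub_self {n j : ℕ} (hj : j ≤ n) :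
    ∏ m ∈ (range (n + 1)).erase j, ((m : R) - j) = (-1) ^ j * j ! * (n - j)! := by
  have hsplit : (range (n + 1)).erase j = range j ∪ Ico (j + 1) (n + 1) := by
    ext m; simp only [mem_erase, mem_range, mem_union, mem_Ico]; omega
  have hdisj : Disjoint (range j) (Ico (j + 1) (n + 1)) := by
    simp only [disjoint_left, mem_range, mem_Ico]; omega
  have hbelow : ∏ m ∈ range j, ((m : R) - j) = (-1) ^ j * j ! :=
    calc ∏ m ∈ range j, ((m : R) - j) = ∏ m ∈ range j, (-1 * ((j - m : ℕ) : R)) :=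
          prod_congr rfl fun m hm => by rw [Nat.cast_sub (mem_range.mp hm).le]; ring
      _ = (-1) ^ j * j ! := by
          rw [prod_mul_distrib, prod_const, card_range, ← cast_prod,
            ← descFactorial_eq_prod_range, descFactorial_self]
  have habove : ∏ m ∈ Ico (j + 1) (n + 1), ((m : R) - j) = (n - j)! := by
    rw [prod_Ico_eq_prod_range, show n + 1 - (j + 1) = n - j by omega,
      ← prod_range_add_one_eq_factorial]
    push_cast
    exact prod_congr rfl fun m _ => by ring
  rw [hsplit, prod_union hdisj, hbelow, habove]

theorem Fin.prod_univ_erase_sub_self {n : ℕ} (j : Fin (n + 1)) :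
    ∏ m ∈ univ.erase j, (((m : ℕ) : R) - (j : ℕ)) = (-1) ^ (j : ℕ) * (j : ℕ)! * (n - j)! := by
  rw [Fin.prod_univ_erase_eq_prod_range_erase (fun m : ℕ => (m : R) - (j : ℕ)),
    prod_range_erase_sub_self (Nat.lt_succ_iff.mp j.isLt)]

end Products

namespace Matrix

variable {F ι : Type*} [Field F] [Fintype ι]

def cauchy (x y : ι → F) : Matrix ι ι F := of fun i j => (x i - y j)⁻¹

variable [DecidableEq ι]

noncomputable def cauchyInv (x y : ι → F) : Matrix ι ι F := of fun j k =>
  nodalWeight univ y j * nodalWeight univ x k * (nodal univ x).eval (y j) *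
    (nodal univ y).eval (x k) / (y j - x k)

variable {x y : ι → F}

omit [Fintype ι] in
theorem eval_nodal_erase_of_ne {s : Finset ι} {k : ι} (hk : k ∈ s) {t : F} (ht : t ≠ x k) :
    (nodal (s.erase k) x).eval t = (nodal s x).eval t / (t - x k) := by
  rw [eq_div_iff (sub_ne_zero.mpr ht), eval_nodal, eval_nodal, mul_comm,
    mul_prod_erase s (fun i => t - x i) hk]

theorem cauchy_mul_cauchyInv (hx : Injective x) (hy : Injective y) (hxy : ∀ i j, x i ≠ y j) :
    cauchy x y * cauchyInv x y = 1 := by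
  ext l k
  set p := nodal (univ.erase k) x
  have hp : p.degree < #(univ : Finset ι) := by
    rw [degree_nodal, card_erase_of_mem (mem_univ k), Nat.cast_lt]
    exact Nat.sub_lt (card_pos.mpr ⟨k, mem_univ k⟩) one_pos
  have hx_nodes : ∀ j ∈ univ, x l ≠ y j := fun j _ => hxy l j
  have hinterp : ∑ j, nodalWeight univ y j * (x l - y j)⁻¹ * p.eval (y j) =
      p.eval (x l) / (nodal univ y).eval (x l) := by
    rw [eq_div_iff (eval_nodal_not_at_node hx_nodes), mul_comm]
    conv_rhs => rw [eq_interpolate hy.injOn hp]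
    exact (eval_interpolate_not_at_node _ hx_nodes).symm
  have hpy : ∀ j, p.eval (y j) = (nodal univ x).eval (y j) / (y j - x k) :=
    fun j => eval_nodal_erase_of_ne (mem_univ k) (hxy k j).symm
  have hsum : (cauchy x y * cauchyInv x y) l k = nodalWeight univ x k * (nodal univ y).eval (x k) *
      ∑ j, nodalWeight univ y j * (x l - y j)⁻¹ * p.eval (y j) := by
    simp only [mul_apply, cauchy, cauchyInv, of_apply, mul_sum, hpy]
    exact sum_congr rfl fun j _ => by ring
  rw [hsum, hinterp, one_apply]
  split_ifs with hlk
  · subst hlk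
    rw [← inv_inv (p.eval (x l)), ← nodalWeight_eq_eval_nodal_erase_inv]
    field_simp [nodalWeight_ne_zero hx.injOn (mem_univ l), eval_nodal_not_at_node hx_nodes]
  · rw [eval_nodal_at_node (mem_erase.mpr ⟨hlk, mem_univ l⟩), zero_div, mul_zero]

end Matrix

theorem cauchyInv_hilbert_apply (n : ℕ) (j k : Fin (n + 1)) :
    cauchyInv (fun l : Fin (n + 1) => ((l : ℕ) : ℝ)) (fun l => -(((l : ℕ) : ℝ) + 1)) j k =
      (-1) ^ ((j : ℕ) + (k : ℕ)) * ((n + j + 1)! * (n + k + 1)! /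
        ((j + k + 1) * ((j : ℕ)! * (k : ℕ)!) ^ 2 * (n - j)! * (n - k)!)) := by
  have hwy : ∏ m ∈ univ.erase j, (-(((j : ℕ) : ℝ) + 1) - -(((m : ℕ) : ℝ) + 1)) =
      (-1) ^ (j : ℕ) * (j : ℕ)! * (n - j)! := by
    rw [← Fin.prod_univ_erase_sub_self]
    exact prod_congr rfl fun m _ => by ring
  have hwx : ∏ m ∈ univ.erase k, (((k : ℕ) : ℝ) - (m : ℕ)) =
      (-1) ^ n * ((-1) ^ (k : ℕ) * (k : ℕ)! * (n - k)!) := by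
    have hneg := prod_neg (s := univ.erase k) fun m : Fin (n + 1) => ((m : ℕ) : ℝ) - (k : ℕ)
    rw [card_erase_of_mem (mem_univ k), Finset.card_univ, Fintype.card_fin, add_tsub_cancel_right,
      Fin.prod_univ_erase_sub_self] at hneg
    rw [← hneg]
    exact prod_congr rfl fun m _ => by ring
  have hnx : ∏ m : Fin (n + 1), (-(((j : ℕ) : ℝ) + 1) - (m : ℕ)) =
      (-1) ^ (n + 1) * ((j + 1 : ℕ).ascFactorial (n + 1) : ℝ) := by
    have hneg := prod_neg (s := range (n + 1)) fun m : ℕ => ((j + 1 : ℕ) : ℝ) + m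
    rw [card_range, ← cast_ascFactorial_eq_prod_range] at hneg
    rw [Fin.prod_univ_eq_prod_range (fun m => -(((j : ℕ) : ℝ) + 1) - m), ← hneg]
    exact prod_congr rfl fun m _ => by push_cast; ring
  have hny : ∏ m : Fin (n + 1), (((k : ℕ) : ℝ) - -(((m : ℕ) : ℝ) + 1)) =
      ((k + 1 : ℕ).ascFactorial (n + 1) : ℝ) := by
    rw [Fin.prod_univ_eq_prod_range (fun m => ((k : ℕ) : ℝ) - -((m : ℝ) + 1)),
      cast_ascFactorial_eq_prod_range]
    exact prod_congr rfl fun m _ => by push_cast; ring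
  have hasc : ∀ i : ℕ, ((i + 1).ascFactorial (n + 1) : ℝ) = (n + i + 1)! / i ! := fun i => by
    rw [eq_div_iff (by positivity), mul_comm, ← cast_mul, factorial_mul_ascFactorial,
      show i + (n + 1) = n + i + 1 by ring]
  simp only [cauchyInv, of_apply, nodalWeight, eval_nodal, prod_inv_distrib, hwy, hwx, hnx, hny,
    hasc, show -(((j : ℕ) : ℝ) + 1) - (k : ℕ) = -((j : ℕ) + (k : ℕ) + 1) by ring]
  field_simp
  ring_nf
  simp only [pow_mul', neg_one_sq, one_pow, mul_one]

theorem cast_mul_choose_eq_factorial_div {n j k : ℕ} (hj : j ≤ n) (hk : k ≤ n) :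
    ((j + k + 1 : ℝ) * (choose (n + j + 1) (n - k)) * (choose (n + k + 1) (n - j)) *
      (choose (j + k) j) * (choose (j + k) k)) =
      (n + j + 1)! * (n + k + 1)! / ((j + k + 1) * (j ! * k !) ^ 2 * (n - j)! * (n - k)!) := by
  rw [cast_choose ℝ (show n - k ≤ n + j + 1 by omega),
    cast_choose ℝ (show n - j ≤ n + k + 1 by omega), cast_choose ℝ (show j ≤ j + k by omega),
    cast_choose ℝ (show k ≤ j + k by omega), show n + j + 1 - (n - k) = j + k + 1 by omega,
    show n + k + 1 - (n - j) = j + k + 1 by omega, add_tsub_cancel_left, add_tsub_cancel_right,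
    factorial_succ (j + k)]
  push_cast
  field_simp

theorem inverse_Hilbert_matrix (n : ℕ) (H B : Matrix (Fin (n + 1)) (Fin (n + 1)) ℝ)
    (hH : ∀ l j : Fin (n + 1), H l j = 1 / ((l : ℕ) + (j : ℕ) + 1 : ℝ))
    (hB : ∀ l j : Fin (n + 1), B l j =
      (-1 : ℝ) ^ ((l : ℕ) + (j : ℕ)) * ((l : ℕ) + (j : ℕ) + 1 : ℝ) *
        (Nat.choose (n + (l : ℕ) + 1) (n - (j : ℕ)) : ℝ) *
        (Nat.choose (n + (j : ℕ) + 1) (n - (l : ℕ)) : ℝ) *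
        (Nat.choose ((l : ℕ) + (j : ℕ)) (l : ℕ) : ℝ) *
        (Nat.choose ((l : ℕ) + (j : ℕ)) (j : ℕ) : ℝ)) :
    H * B = 1 ∧ B * H = 1 := by
  set x : Fin (n + 1) → ℝ := fun l => ((l : ℕ) : ℝ)
  set y : Fin (n + 1) → ℝ := fun j => -(((j : ℕ) : ℝ) + 1)
  have hx : Injective x := fun a b h => Fin.ext (by simpa [x] using h)
  have hy : Injective y := fun a b h => Fin.ext (by simpa [y] using h)
  have hxy : ∀ l j, x l ≠ y j := fun l j => by
    have : (0 : ℝ) < (l : ℕ) - -((j : ℕ) + 1) := by rw [sub_neg_eq_add]; positivity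
    exact sub_ne_zero.mp this.ne'
  have hHc : H = cauchy x y := by
    ext l j
    rw [hH, cauchy, of_apply, one_div, sub_neg_eq_add, add_assoc]
  have hBc : B = cauchyInv x y := by
    ext j k
    rw [hB, cauchyInv_hilbert_apply, ← cast_mul_choose_eq_factorial_div (Nat.lt_succ_iff.mp j.isLt)
      (Nat.lt_succ_iff.mp k.isLt)]
    ring
  have hHB : H * B = 1 := hHc ▸ hBc ▸ cauchy_mul_cauchyInv hx hy hxy
  exact ⟨hHB, mul_eq_one_comm.mp hHB⟩
end

section
/- The determinant of the Hilbert matrix H_n = (1/(l+j+1))_{0≤l,j≤n} equals (∏_{k=1}^n (2k+1) C(2k,k)^2)^{-1}. -/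
open Polynomial Finset
open scoped Nat

/-!
With `L p = ∫₀¹ p`, the Hilbert matrix is the moment matrix `(L (X ^ (l + j)))`. If `p k` has
degree at most `k` and is `L`-orthogonal to all lower powers of `X`, the coefficient matrix of the
`p k` is lower triangular and multiplying it into the moment matrix gives an upper triangular one,
so the determinant is `∏ L (X ^ k * p k) / (p k).coeff k`. The shifted Legendre polynomials
`k ! P k = (d/dX)^k (X ^ k (1 - X) ^ k)` are such a family: integrating by parts `k` times reduces
`L (X ^ m * P k)` to `0` for `m < k` and to a Beta integral `∫₀¹ x ^ k (1 - x) ^ k` for `m = k`.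
-/

noncomputable def momentMatrix {R : Type*} [CommRing R] (L : R[X] →ₗ[R] R) (n : ℕ) :
    Matrix (Fin n) (Fin n) R :=
  Matrix.of fun l j => L (X ^ ((l : ℕ) + j))

theorem prod_coeff_mul_det_momentMatrix {R : Type*} [CommRing R] (L : R[X] →ₗ[R] R) (n : ℕ)
    (p : ℕ → R[X]) (hdeg : ∀ i, (p i).natDegree ≤ i) (horth : ∀ m i, m < i → L (X ^ m * p i) = 0) :
    (∏ i : Fin n, (p i).coeff i) * (momentMatrix L n).det = ∏ i : Fin n, L (X ^ (i : ℕ) * p i) := by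
  set B : Matrix (Fin n) (Fin n) R := Matrix.of fun i j => (p i).coeff j
  have hBM : B * momentMatrix L n = Matrix.of fun i j : Fin n => L (X ^ (j : ℕ) * p i) := by
    ext i j
    rw [Matrix.mul_apply, Matrix.of_apply, (p i).as_sum_range' n ((hdeg i).trans_lt i.isLt),
      mul_sum, map_sum, ← Fin.sum_univ_eq_sum_range]
    refine sum_congr rfl fun l _ => ?_
    rw [← C_mul_X_pow_eq_monomial, mul_left_comm, ← smul_eq_C_mul, map_smul, smul_eq_mul,
      ← pow_add, add_comm]
    rfl
  have hB : B.IsLowerTriangular := fun i j hij =>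
    coeff_eq_zero_of_natDegree_lt ((hdeg i).trans_lt hij)
  have hBM_upper : (B * momentMatrix L n).IsUpperTriangular := fun i j hij => by
    rw [hBM]
    exact horth j i hij
  have hdetB : B.det = ∏ i : Fin n, (p i).coeff i := Matrix.det_of_isLowerTriangular B hB
  rw [← hdetB, ← Matrix.det_mul, Matrix.det_of_isUpperTriangular hBM_upper, hBM]
  rfl

noncomputable def unitIntegral : ℝ[X] →ₗ[ℝ] ℝ where
  toFun p := ∫ x in (0 : ℝ)..1, p.eval x
  map_add' p q := by
    simpa using intervalIntegral.integral_add (p.continuous.intervalIntegrable 0 1)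
      (q.continuous.intervalIntegrable 0 1)
  map_smul' c p := by simp

theorem unitIntegral_apply (p : ℝ[X]) : unitIntegral p = ∫ x in (0 : ℝ)..1, p.eval x := rfl

theorem unitIntegral_X_pow (j : ℕ) : unitIntegral (X ^ j) = 1 / (j + 1) := by
  simp [unitIntegral_apply, integral_pow]

theorem unitIntegral_derivative (p : ℝ[X]) :
    unitIntegral (derivative p) = p.eval 1 - p.eval 0 :=
  intervalIntegral.integral_deriv_eq_sub' _ (funext fun _ => p.deriv)
    (fun _ _ => p.differentiableAt) p.derivative.continuous.continuousOn

theorem unitIntegral_mul_derivative (p q : ℝ[X]) :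
    unitIntegral (p * derivative q) =
      (p * q).eval 1 - (p * q).eval 0 - unitIntegral (derivative p * q) := by
  rw [eq_sub_iff_add_eq, ← map_add, add_comm, ← derivative_mul, unitIntegral_derivative]

theorem unitIntegral_C_mul (c : ℝ) (p : ℝ[X]) : unitIntegral (C c * p) = c * unitIntegral p := by
  rw [← smul_eq_C_mul, map_smul, smul_eq_mul]

theorem unitIntegral_X_pow_succ_mul_iterate_derivative_succ {f : ℝ[X]} {i : ℕ}
    (h0 : (derivative^[i] f).eval 0 = 0) (h1 : (derivative^[i] f).eval 1 = 0) (m : ℕ) :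
    unitIntegral (X ^ (m + 1) * derivative^[i + 1] f) =
      -(m + 1) * unitIntegral (X ^ m * derivative^[i] f) := by
  rw [Function.iterate_succ_apply', unitIntegral_mul_derivative, derivative_X_pow, mul_assoc,
    unitIntegral_C_mul]
  simp only [eval_mul, h0, h1, mul_zero, sub_self, zero_sub, Nat.cast_succ, Nat.add_sub_cancel]
  ring

theorem unitIntegral_X_pow_mul_iterate_derivative {f : ℝ[X]} {k : ℕ}
    (hf : ∀ j < k, (derivative^[j] f).eval 0 = 0 ∧ (derivative^[j] f).eval 1 = 0) {m i : ℕ}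
    (hmi : m ≤ i) (hik : i ≤ k) :
    unitIntegral (X ^ m * derivative^[i] f) =
      (-1) ^ m * m ! * unitIntegral (derivative^[i - m] f) := by
  induction m generalizing i with
  | zero => simp
  | succ m ih =>
    obtain ⟨i, rfl⟩ : ∃ i', i = i' + 1 := ⟨i - 1, by omega⟩
    obtain ⟨h0, h1⟩ := hf i (by omega)
    rw [unitIntegral_X_pow_succ_mul_iterate_derivative_succ h0 h1, ih (by omega) (by omega),
      Nat.add_sub_add_right, Nat.factorial_succ]
    push_cast
    ring

theorem unitIntegral_X_pow_mul_iterate_derivative_of_lt {f : ℝ[X]} {k : ℕ}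
    (hf : ∀ j < k, (derivative^[j] f).eval 0 = 0 ∧ (derivative^[j] f).eval 1 = 0) {m : ℕ}
    (hm : m < k) : unitIntegral (X ^ m * derivative^[k] f) = 0 := by
  obtain ⟨h0, h1⟩ := hf (k - m - 1) (by omega)
  rw [unitIntegral_X_pow_mul_iterate_derivative hf hm.le le_rfl,
    show k - m = k - m - 1 + 1 by omega, Function.iterate_succ_apply', unitIntegral_derivative,
    h0, h1, sub_zero, mul_zero]

theorem eval_iterate_derivative_X_pow_mul_one_sub_X_pow {k j : ℕ} (hj : j < k) :
    (derivative^[j] (X ^ k * (1 - X) ^ k : ℝ[X])).eval 0 = 0 ∧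
      (derivative^[j] (X ^ k * (1 - X) ^ k : ℝ[X])).eval 1 = 0 := by
  have hk : k - j ≠ 0 := by omega
  constructor
  · obtain ⟨r, hr⟩ := pow_sub_dvd_iterate_derivative_of_pow_dvd j (dvd_mul_right (X ^ k : ℝ[X]) _)
    rw [hr]
    simp [hk]
  · obtain ⟨r, hr⟩ :=
      pow_sub_dvd_iterate_derivative_of_pow_dvd j (dvd_mul_left ((1 - X) ^ k : ℝ[X]) _)
    rw [hr]
    simp [hk]

theorem unitIntegral_X_pow_mul_one_sub_X_pow (a b : ℕ) :
    unitIntegral (X ^ a * (1 - X) ^ b) = a ! * b ! / (a + b + 1)! := by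
  induction b generalizing a with
  | zero =>
    rw [pow_zero, mul_one, unitIntegral_X_pow, add_zero, Nat.factorial_zero, Nat.factorial_succ]
    push_cast
    field_simp
  | succ b ih =>
    have hderiv : derivative (X ^ (a + 1) * (1 - X) ^ (b + 1) : ℝ[X]) =
        C (a + 1 : ℝ) * (X ^ a * (1 - X) ^ (b + 1)) -
          C (b + 1 : ℝ) * (X ^ (a + 1) * (1 - X) ^ b) := by
      simp only [derivative_mul, derivative_pow, derivative_sub, derivative_one, derivative_X,
        Nat.add_sub_cancel, Nat.cast_succ]
      ring
    have hparts : (a + 1) * unitIntegral (X ^ a * (1 - X) ^ (b + 1)) =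
        (b + 1) * unitIntegral (X ^ (a + 1) * (1 - X) ^ b) := by
      have h := unitIntegral_derivative (X ^ (a + 1) * (1 - X) ^ (b + 1))
      rw [hderiv, map_sub, unitIntegral_C_mul, unitIntegral_C_mul] at h
      simp only [eval_mul, eval_pow, eval_X, eval_sub, eval_one, sub_self, zero_pow
        (Nat.succ_ne_zero _), mul_zero, zero_mul, sub_zero] at h
      linarith
    rw [ih, show a + 1 + b + 1 = a + (b + 1) + 1 by omega] at hparts
    have ha : (a + 1 : ℝ) ≠ 0 := by positivity
    rw [← mul_right_inj' ha, hparts, Nat.factorial_succ a, Nat.factorial_succ b]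
    push_cast
    ring

theorem factorial_mul_map_shiftedLegendre (k : ℕ) :
    (k ! : ℝ[X]) * (shiftedLegendre k).map (Int.castRingHom ℝ) =
      derivative^[k] (X ^ k * (1 - X) ^ k) := by
  have h := congrArg (map (Int.castRingHom ℝ)) (factorial_mul_shiftedLegendre_eq k)
  rw [← iterate_derivative_map] at h
  simpa using h

theorem unitIntegral_X_pow_mul_shiftedLegendre {m k : ℕ} (hm : m < k) :
    unitIntegral (X ^ m * (shiftedLegendre k).map (Int.castRingHom ℝ)) = 0 := by
  have h := unitIntegral_X_pow_mul_iterate_derivative_of_lt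
    (fun j hj => eval_iterate_derivative_X_pow_mul_one_sub_X_pow hj) hm
  rw [← factorial_mul_map_shiftedLegendre, mul_left_comm, ← map_natCast C, unitIntegral_C_mul] at h
  exact (mul_eq_zero.1 h).resolve_left (by positivity)

theorem unitIntegral_X_pow_mul_shiftedLegendre_self (k : ℕ) :
    unitIntegral (X ^ k * (shiftedLegendre k).map (Int.castRingHom ℝ)) =
      (-1) ^ k * k ! ^ 2 / (2 * k + 1)! := by
  have h := unitIntegral_X_pow_mul_iterate_derivative
    (fun j hj => eval_iterate_derivative_X_pow_mul_one_sub_X_pow (k := k) hj) le_rfl le_rfl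
  rw [← factorial_mul_map_shiftedLegendre, mul_left_comm, ← map_natCast C, unitIntegral_C_mul,
    Nat.sub_self, Function.iterate_zero_apply, unitIntegral_X_pow_mul_one_sub_X_pow,
    ← two_mul] at h
  have hk : (k ! : ℝ) ≠ 0 := by positivity
  rw [← mul_right_inj' hk, h]
  ring

theorem coeff_map_shiftedLegendre_self (k : ℕ) :
    ((shiftedLegendre k).map (Int.castRingHom ℝ)).coeff k = (-1) ^ k * (2 * k).choose k := by
  simp [coeff_shiftedLegendre, two_mul]

theorem natDegree_map_shiftedLegendre_le (k : ℕ) :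
    ((shiftedLegendre k).map (Int.castRingHom ℝ)).natDegree ≤ k :=
  natDegree_map_le.trans (natDegree_shiftedLegendre k).le

theorem unitIntegral_X_pow_mul_shiftedLegendre_self_div_coeff (k : ℕ) :
    unitIntegral (X ^ k * (shiftedLegendre k).map (Int.castRingHom ℝ)) /
        ((shiftedLegendre k).map (Int.castRingHom ℝ)).coeff k =
      (((2 * k + 1 : ℕ) : ℝ) * ((2 * k).choose k : ℝ) ^ 2)⁻¹ := by
  have hfact : ((2 * k + 1)! : ℝ) = (2 * k + 1 : ℕ) * ((2 * k).choose k * k ! * k !) := by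
    rw [two_mul, Nat.factorial_succ, ← Nat.add_choose_mul_factorial_mul_factorial k k]
    push_cast
    ring
  have hchoose : ((2 * k).choose k : ℝ) ≠ 0 := by
    exact_mod_cast (Nat.choose_pos (by omega)).ne'
  rw [unitIntegral_X_pow_mul_shiftedLegendre_self, coeff_map_shiftedLegendre_self, hfact]
  field_simp

theorem det_momentMatrix_unitIntegral (n : ℕ) :
    (momentMatrix unitIntegral n).det =
      ∏ k ∈ range n, (((2 * k + 1 : ℕ) : ℝ) * ((2 * k).choose k : ℝ) ^ 2)⁻¹ := by
  set P : ℕ → ℝ[X] := fun k => (shiftedLegendre k).map (Int.castRingHom ℝ)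
  have hcoeff : ∏ k : Fin n, (P k).coeff k ≠ 0 :=
    prod_ne_zero_iff.2 fun k _ => by
      rw [coeff_map_shiftedLegendre_self]
      exact mul_ne_zero (pow_ne_zero _ (by norm_num))
        (Nat.cast_ne_zero.2 (Nat.choose_pos (by omega)).ne')
  have h := prod_coeff_mul_det_momentMatrix unitIntegral n P
    natDegree_map_shiftedLegendre_le fun _ _ => unitIntegral_X_pow_mul_shiftedLegendre
  rw [mul_comm, ← eq_div_iff hcoeff, ← prod_div_distrib] at h
  simp only [P, unitIntegral_X_pow_mul_shiftedLegendre_self_div_coeff] at h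
  rw [h, Fin.prod_univ_eq_prod_range
    (fun k => (((2 * k + 1 : ℕ) : ℝ) * ((2 * k).choose k : ℝ) ^ 2)⁻¹)]

theorem det_Hilbert_matrix (n : ℕ) (H : Matrix (Fin (n + 1)) (Fin (n + 1)) ℝ)
    (hH : ∀ l j : Fin (n + 1), H l j = 1 / ((l : ℕ) + (j : ℕ) + 1 : ℝ)) :
    H.det = (∏ k ∈ Finset.Icc 1 n,
      ((2 * k + 1 : ℕ) : ℝ) * (Nat.choose (2 * k) k : ℝ) ^ 2)⁻¹ := by
  have hHilbert : H = momentMatrix unitIntegral (n + 1) := by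
    ext l j
    rw [hH, momentMatrix, Matrix.of_apply, unitIntegral_X_pow]
    push_cast
    rfl
  rw [hHilbert, det_momentMatrix_unitIntegral, Nat.range_succ_eq_Icc_zero,
    ← insert_Icc_add_one_left_eq_Icc n.zero_le, prod_insert (by simp), prod_inv_distrib]
  simp
end

section
/- If 2 sinh θ is a positive integer, then all generalized Fibonomial coefficients (n choose k)_{F(θ)} are integers. -/
/-!
Since `2 sinh θ = m` is an integer, `F` is the integer Lucas sequence `U(m, -1)`. Every such
sequence satisfies the addition formula `F (a + b + 1) = F (a + 1) F (b + 1) + F a F b`, which turns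
`F (n + 1) = F (k + 1) F (n - k + 1) + F k F (n - k)` into the Pascal-type recurrence
`C(n+1, k+1) = F (n - k + 1) C(n, k) + F k C(n, k+1)` for the Fibonomial coefficients;
by induction they are therefore integers.
-/

open Finset

section LucasU

variable {R : Type*} [CommSemiring R]

-- The Lucas sequence `U_n(P, -1)`.
def lucasU (P : R) : ℕ → R
  | 0 => 0
  | 1 => 1
  | n + 2 => P * lucasU P (n + 1) + lucasU P n

@[simp] lemma lucasU_zero (P : R) : lucasU P 0 = 0 := rfl

@[simp] lemma lucasU_one (P : R) : lucasU P 1 = 1 := rfl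

lemma lucasU_add_two (P : R) (n : ℕ) :
    lucasU P (n + 2) = P * lucasU P (n + 1) + lucasU P n := rfl

lemma lucasU_add_succ (P : R) (a b : ℕ) :
    lucasU P (a + b + 1) = lucasU P (a + 1) * lucasU P (b + 1) + lucasU P a * lucasU P b := by
  induction a using Nat.twoStepInduction generalizing b with
  | zero => simp
  | one =>
    rw [show 1 + b + 1 = b + 2 by omega, lucasU_add_two]
    simp [lucasU_add_two]
  | more a ih₁ ih₂ =>
    have hsplit :
        lucasU P (a + 2 + b + 1) = P * lucasU P (a + 1 + b + 1) + lucasU P (a + b + 1) := by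
      rw [show a + 2 + b + 1 = a + b + 1 + 2 by omega, lucasU_add_two,
        show a + b + 1 + 1 = a + 1 + b + 1 by omega]
    rw [hsplit, ih₂ b, ih₁ b, show a + 2 + 1 = a + 1 + 2 from rfl, lucasU_add_two P (a + 1),
      lucasU_add_two P a]
    ring

lemma map_lucasU {S : Type*} [CommSemiring S] (φ : R →+* S) (P : R) (n : ℕ) :
    φ (lucasU P n) = lucasU (φ P) n := by
  induction n using Nat.twoStepInduction with
  | zero => simp
  | one => simp
  | more n ih₁ ih₂ => simp [lucasU_add_two, ih₁, ih₂]

lemma lucasU_succ_pos [PartialOrder R] [IsStrictOrderedRing R] {P : R} (hP : 0 < P) (n : ℕ) :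
    0 < lucasU P (n + 1) := by
  induction n using Nat.twoStepInduction with
  | zero => simp
  | one => simpa [lucasU_add_two] using hP
  | more n ih₁ ih₂ =>
    rw [lucasU_add_two]
    positivity

lemma eq_lucasU_of_recurrence {P : R} {F : ℕ → R} (h₀ : F 0 = 0) (h₁ : F 1 = 1)
    (hrec : ∀ n, 1 ≤ n → F (n + 1) = P * F n + F (n - 1)) (n : ℕ) : F n = lucasU P n := by
  induction n using Nat.twoStepInduction with
  | zero => exact h₀
  | one => exact h₁
  | more n ih₁ ih₂ => rw [hrec (n + 1) (by omega), Nat.add_sub_cancel, ih₁, ih₂, lucasU_add_two]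

end LucasU

section Fibonomial

variable {R : Type*} [CommSemiring R]

-- Agrees with the product formula when `f` satisfies the addition formula: see
-- `prod_mul_fibonomial`.
def fibonomial (f : ℕ → R) : ℕ → ℕ → R
  | _, 0 => 1
  | 0, _ + 1 => 0
  | n + 1, k + 1 => f (n - k + 1) * fibonomial f n k + f k * fibonomial f n (k + 1)

lemma map_fibonomial {S : Type*} [CommSemiring S] (φ : R →+* S) (f : ℕ → R) (n k : ℕ) :
    φ (fibonomial f n k) = fibonomial (φ ∘ f) n k := by
  induction n generalizing k with
  | zero => cases k <;> simp [fibonomial]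
  | succ n ih => cases k <;> simp [fibonomial, ih]

lemma prod_mul_fibonomial {f : ℕ → R} (h₀ : f 0 = 0)
    (hadd : ∀ a b, f (a + b + 1) = f (a + 1) * f (b + 1) + f a * f b) (n k : ℕ) :
    (∏ j ∈ range k, f (j + 1)) * fibonomial f n k = ∏ j ∈ range k, f (n - j) := by
  induction n generalizing k with
  | zero => cases k <;> simp [fibonomial, prod_range_succ', h₀]
  | succ n ih =>
    cases k with
    | zero => simp [fibonomial]
    | succ k =>
      have hpascal : f (n + 1) * ∏ j ∈ range k, f (n - j) =
          (f (k + 1) * f (n - k + 1) + f k * f (n - k)) * ∏ j ∈ range k, f (n - j) := by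
        rcases le_or_gt k n with hkn | hnk
        · have := hadd k (n - k)
          rw [Nat.add_sub_cancel' hkn] at this
          rw [this]
        · rw [prod_eq_zero (mem_range.mpr hnk) (by simpa using h₀), mul_zero, mul_zero]
      calc (∏ j ∈ range (k + 1), f (j + 1)) * fibonomial f (n + 1) (k + 1)
          = f (k + 1) * f (n - k + 1) * ((∏ j ∈ range k, f (j + 1)) * fibonomial f n k) +
              f k * ((∏ j ∈ range (k + 1), f (j + 1)) * fibonomial f n (k + 1)) := by
            rw [fibonomial, prod_range_succ]; ring
        _ = (f (k + 1) * f (n - k + 1) + f k * f (n - k)) * ∏ j ∈ range k, f (n - j) := by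
            rw [ih, ih, prod_range_succ]; ring
        _ = ∏ j ∈ range (k + 1), f (n + 1 - j) := by
            rw [← hpascal, prod_range_succ']
            simp only [Nat.succ_sub_succ, Nat.sub_zero, mul_comm]

lemma prod_div_eq_fibonomial {K : Type*} [Field K] {f : ℕ → K} (h₀ : f 0 = 0)
    (hadd : ∀ a b, f (a + b + 1) = f (a + 1) * f (b + 1) + f a * f b)
    (hf : ∀ j, f (j + 1) ≠ 0) (n k : ℕ) :
    ∏ j ∈ range k, f (n - j) / f (j + 1) = fibonomial f n k := by
  rw [prod_div_distrib, div_eq_iff (prod_ne_zero_iff.mpr fun j _ ↦ hf j),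
    ← prod_mul_fibonomial h₀ hadd, mul_comm]

end Fibonomial

theorem fibinom_integer_general (θ : ℝ) (m : ℕ) (hm : 1 ≤ m)
    (hsinh : 2 * Real.sinh θ = m) (F : ℕ → ℝ)
    (h0 : F 0 = 0) (h1 : F 1 = 1)
    (hrec : ∀ n : ℕ, 1 ≤ n → F (n + 1) = 2 * Real.sinh θ * F n + F (n - 1)) :
    ∀ n k : ℕ, k ≤ n → ∃ z : ℤ, (∏ j ∈ Finset.range k, F (n - j) / F (j + 1)) = z := by
  rw [hsinh] at hrec
  have hF : F = lucasU (m : ℝ) := funext (eq_lucasU_of_recurrence h0 h1 hrec)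
  have hcast : F = Int.cast ∘ lucasU (m : ℤ) := by
    ext n
    simpa [hF] using (map_lucasU (Int.castRingHom ℝ) m n).symm
  have hm' : (0 : ℝ) < m := by exact_mod_cast hm
  intro n k _
  refine ⟨fibonomial (lucasU (m : ℤ)) n k, ?_⟩
  rw [prod_div_eq_fibonomial h0 (by simpa [hF] using lucasU_add_succ (m : ℝ))
    (fun j ↦ by simpa [hF] using (lucasU_succ_pos hm' j).ne') n k, hcast]
  exact (map_fibonomial (Int.castRingHom ℝ) _ n k).symm

theorem fibinom_integer (θ : ℝ) (hθ : 0 < θ) (m : ℕ) (hm : 1 ≤ m)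
    (hsinh : 2 * Real.sinh θ = m) (F : ℕ → ℝ)
    (h0 : F 0 = 0) (h1 : F 1 = 1)
    (hrec : ∀ n : ℕ, 1 ≤ n → F (n + 1) = 2 * Real.sinh θ * F n + F (n - 1)) :
    ∀ n k : ℕ, k ≤ n → ∃ z : ℤ, (∏ j ∈ Finset.range k, F (n - j) / F (j + 1)) = z :=
  fibinom_integer_general θ m hm hsinh F h0 h1 hrec
end

section
/- For q = −e^{−2θ} with θ > 0, the generalized quantum Hilbert matrix satisfies H_n^{(α)}(q) = U_n F_n^{(α)}(θ) U_n, where U_n is the diagonal matrix with entries i^l, l = 0,…,n, H_n^{(α)}(q) = ([α]_q/[l+j+α]_q), and F_n^{(α)}(θ) = (F_α(θ)/F_{l+j+α}(θ)). -/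
noncomputable def genFib (θ : ℝ) (m : ℕ) : ℂ :=
  (Complex.exp (m * θ) - (-1 : ℂ) ^ m * Complex.exp (-(m * θ))) /
    (Complex.exp θ + Complex.exp (-θ))

/-! With `s = i e^{-θ}` we have `s⁻¹ = -i e^{θ}`, so `[m]_q = i (-i)^m F_m(θ)` for every `m`.
In `[α]_q / [l+j+α]_q` the factor `i (-i)^α` cancels and
`(-i)^{-(l+j)} = i^l i^j`, which is conjugation by `U_n`. -/

open Complex

lemma qint_I_mul_exp_neg (θ : ℝ) (m : ℕ) :
    qint (I * exp (-θ)) m = I * (-I) ^ m * genFib θ m := by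
  have hinv : (I * exp (-θ))⁻¹ = -I * exp θ := by
    rw [mul_inv, inv_I, ← exp_neg, neg_neg]
  have hIpow : I ^ m = (-1) ^ m * (-I) ^ m := by
    rw [← mul_pow, neg_one_mul, neg_neg]
  rw [qint, genFib, hinv, mul_pow, mul_pow, ← exp_nat_mul, ← exp_nat_mul, mul_neg, hIpow,
    show I * exp (-θ) - -I * exp θ = I * (exp θ + exp (-θ)) by ring, ← div_div, mul_div_assoc']
  congr 1
  rw [div_eq_iff I_ne_zero]
  linear_combination (-(-I) ^ m * (exp (m * θ) - (-1) ^ m * exp (-(m * θ)))) * I_sq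

lemma qint_div_qint_add_I_mul_exp_neg (θ : ℝ) (a k : ℕ) :
    qint (I * exp (-θ)) a / qint (I * exp (-θ)) (k + a) =
      I ^ k * (genFib θ a / genFib θ (k + a)) := by
  have hunit : I * (-I) ^ a ≠ 0 := mul_ne_zero I_ne_zero (pow_ne_zero _ (neg_ne_zero.2 I_ne_zero))
  rw [qint_I_mul_exp_neg, qint_I_mul_exp_neg, pow_add,
    show I * ((-I) ^ k * (-I) ^ a) * genFib θ (k + a) =
      I * (-I) ^ a * ((-I) ^ k * genFib θ (k + a)) by ring,
    mul_div_mul_left _ _ hunit, div_mul_eq_div_div_swap, div_eq_mul_inv _ ((-I) ^ k), ← inv_pow,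
    inv_neg, inv_I, neg_neg, mul_comm]

theorem quantum_Hilbert_unitarily_related_general (θ : ℝ) (n α : ℕ)
    (H F U : Matrix (Fin (n + 1)) (Fin (n + 1)) ℂ)
    (hH : ∀ l j : Fin (n + 1), H l j =
      qint (Complex.I * Complex.exp (-θ)) α /
        qint (Complex.I * Complex.exp (-θ)) ((l : ℕ) + (j : ℕ) + α))
    (hF : ∀ l j : Fin (n + 1), F l j = genFib θ α / genFib θ ((l : ℕ) + (j : ℕ) + α))
    (hU : U = Matrix.diagonal fun l : Fin (n + 1) => Complex.I ^ (l : ℕ)) :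
    H = U * F * U := by
  subst hU
  ext l j
  rw [hH, Matrix.mul_diagonal, Matrix.diagonal_mul, hF, qint_div_qint_add_I_mul_exp_neg, pow_add]
  ring

theorem quantum_Hilbert_unitarily_related (θ : ℝ) (hθ : 0 < θ) (n α : ℕ) (hα : 1 ≤ α)
    (H F U : Matrix (Fin (n + 1)) (Fin (n + 1)) ℂ)
    (hH : ∀ l j : Fin (n + 1), H l j =
      qint (Complex.I * Complex.exp (-θ)) α /
        qint (Complex.I * Complex.exp (-θ)) ((l : ℕ) + (j : ℕ) + α))
    (hF : ∀ l j : Fin (n + 1), F l j = genFib θ α / genFib θ ((l : ℕ) + (j : ℕ) + α))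
    (hU : U = Matrix.diagonal fun l : Fin (n + 1) => Complex.I ^ (l : ℕ)) :
    H = U * F * U :=
  quantum_Hilbert_unitarily_related_general θ n α H F U hH hF hU
end
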